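/- arXiv:2306.00289 — 2 statements merged into one kernel-verified Lean document; each statement's English description precedes it below -/
import Mathlib

section
/- Let H ∈ (1/2, 1) and 0 ≤ s ≤ t ≤ T. For any g ∈ L²([0,T]), ∫_s^t u^{1/2-H} |g(u)| (∫_u^t r^{H-1/2}(r-u)^{H-3/2} dr) du ≤ (√(B(2-2H, 2H)) T^{H-1/2}/(H-1/2)) ‖g‖_{L²([0,T])} √(t-s), where B denotes the Beta function. -/
open Real MeasureTheory intervalIntegral

/-- The Beta function. -/
noncomputable def betaFn (a b : ℝ) : ℝ := Real.Gamma a * Real.Gamma b / Real.Gamma (a + b)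

/-!
Since `r ^ (H - 1/2) ≤ T ^ (H - 1/2)`, the inner integral is at most
`T ^ (H - 1/2) (t - u) ^ (H - 1/2) / (H - 1/2)`. Cauchy–Schwarz then bounds the outer integral
by `‖g‖` times the square root of `∫_s^t u ^ (1 - 2H) (t - u) ^ (2H - 1) du`. As `1 - 2H < 0`,
replacing `u` by `u - s` only increases this weight, and the shifted integral is a Beta integral
over an interval of length `t - s`, equal to `(t - s) B(2 - 2H, 2H)` by scaling.
-/

lemma integral_rpow_mul_sub_rpow_eq_betaFn {a b c : ℝ} (ha : 0 < a) (hb : 0 < b) (hc : 0 < c) :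
    ∫ x in 0..c, x ^ (a - 1) * (c - x) ^ (b - 1) = c ^ (a + b - 1) * betaFn a b := by
  have hcast : ∫ x in 0..c, ((x ^ (a - 1) * (c - x) ^ (b - 1) : ℝ) : ℂ)
      = ∫ x in 0..c, (x : ℂ) ^ ((a : ℂ) - 1) * ((c : ℂ) - x) ^ ((b : ℂ) - 1) := by
    refine integral_congr fun x hx => ?_
    rw [Set.uIcc_of_le hc.le] at hx
    push_cast [Complex.ofReal_cpow hx.1, Complex.ofReal_cpow (sub_nonneg.2 hx.2)]
    rfl
  have h := congrArg Complex.re ((integral_ofReal.symm.trans hcast).trans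
    (Complex.betaIntegral_scaled a b hc))
  have hpow : (c : ℂ) ^ ((a : ℂ) + b - 1) = ((c ^ (a + b - 1) : ℝ) : ℂ) := by
    push_cast [Complex.ofReal_cpow hc.le]
    rfl
  rw [show betaFn a b = _ from ProbabilityTheory.beta_eq_betaIntegralReal a b ha hb]
  rwa [hpow, Complex.re_ofReal_mul, Complex.ofReal_re] at h

lemma intervalIntegrable_rpow_mul_sub_rpow {p q : ℝ} (hp : -1 < p) (hq : 0 ≤ q) (c s t : ℝ) :
    IntervalIntegrable (fun u => u ^ p * (c - u) ^ q) volume s t :=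
  (intervalIntegrable_rpow' hp).mul_continuousOn
    ((continuous_const.sub continuous_id).rpow_const fun _ => Or.inr hq).continuousOn

lemma integral_rpow_mul_sub_rpow_le_betaFn {a b s t : ℝ} (ha : 0 < a) (ha₁ : a ≤ 1)
    (hb : 1 ≤ b) (hs : 0 ≤ s) (hst : s ≤ t) :
    ∫ u in s..t, u ^ (a - 1) * (t - u) ^ (b - 1) ≤ (t - s) ^ (a + b - 1) * betaFn a b := by
  rcases hst.eq_or_lt with rfl | hlt
  · rw [integral_same, sub_self]
    exact mul_nonneg (rpow_nonneg le_rfl _)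
      (ProbabilityTheory.beta_pos ha (by linarith)).le
  have hshift :
      IntervalIntegrable (fun u => (u - s) ^ (a - 1) * (t - u) ^ (b - 1)) volume s t := by
    simpa [sub_sub_sub_cancel_right] using
      (intervalIntegrable_rpow_mul_sub_rpow (p := a - 1) (q := b - 1)
        (by linarith) (by linarith) (t - s) 0 (t - s)).comp_sub_right s
  calc ∫ u in s..t, u ^ (a - 1) * (t - u) ^ (b - 1)
      ≤ ∫ u in s..t, (u - s) ^ (a - 1) * (t - u) ^ (b - 1) := by
        -- at `u = s` the right-hand integrand takes the junk value `0 ^ (a - 1) = 0`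
        refine integral_mono_on_of_le_Ioo hst
          (intervalIntegrable_rpow_mul_sub_rpow (by linarith) (by linarith) _ _ _) hshift
          fun u hu => ?_
        gcongr ?_ * _
        · exact rpow_nonneg (sub_nonneg.2 hu.2.le) _
        · exact rpow_le_rpow_of_nonpos (sub_pos.2 hu.1) (by linarith) (by linarith)
    _ = ∫ x in 0..t - s, x ^ (a - 1) * ((t - s) - x) ^ (b - 1) := by
        simpa only [sub_self, sub_sub_sub_cancel_right] using
          integral_comp_sub_right (a := s) (b := t)
            (fun x => x ^ (a - 1) * ((t - s) - x) ^ (b - 1)) s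
    _ = (t - s) ^ (a + b - 1) * betaFn a b :=
        integral_rpow_mul_sub_rpow_eq_betaFn ha (by linarith) (sub_pos.2 hlt)

lemma integral_rpow_mul_rpow_sub_nonneg {p q u t : ℝ} (hu : 0 ≤ u) (hut : u ≤ t) :
    0 ≤ ∫ r in u..t, r ^ p * (r - u) ^ q :=
  integral_nonneg hut fun _ hr =>
    mul_nonneg (rpow_nonneg (hu.trans hr.1) _) (rpow_nonneg (sub_nonneg.2 hr.1) _)

lemma integral_rpow_mul_rpow_sub_le {p q u t T : ℝ} (hp : 0 ≤ p) (hq : -1 < q) (hu : 0 ≤ u)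
    (hut : u ≤ t) (htT : t ≤ T) :
    ∫ r in u..t, r ^ p * (r - u) ^ q ≤ T ^ p * ((t - u) ^ (q + 1) / (q + 1)) := by
  have hint : IntervalIntegrable (fun r => (r - u) ^ q) volume u t := by
    simpa using (intervalIntegrable_rpow' hq (a := 0) (b := t - u)).comp_sub_right u
  calc ∫ r in u..t, r ^ p * (r - u) ^ q
      ≤ ∫ r in u..t, T ^ p * (r - u) ^ q := by
        refine integral_mono_on hut
          (hint.continuousOn_mul (continuous_rpow_const hp).continuousOn)
          (hint.const_mul _) fun r hr => ?_
        gcongr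
        · exact rpow_nonneg (sub_nonneg.2 hr.1) _
        · exact hu.trans hr.1
        · exact hr.2.trans htT
    _ = T ^ p * ((t - u) ^ (q + 1) / (q + 1)) := by
        rw [intervalIntegral.integral_const_mul, integral_comp_sub_right (fun x => x ^ q),
          sub_self, integral_rpow (Or.inl hq), zero_rpow (by linarith), sub_zero]

lemma integral_mul_le_sqrt_mul_sqrt {α : Type*} [MeasurableSpace α] {μ : Measure α}
    {f g : α → ℝ} (hf₀ : 0 ≤ᵐ[μ] f) (hg₀ : 0 ≤ᵐ[μ] g) (hf : MemLp f 2 μ) (hg : MemLp g 2 μ) :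
    ∫ x, f x * g x ∂μ ≤ √(∫ x, f x ^ 2 ∂μ) * √(∫ x, g x ^ 2 ∂μ) := by
  simpa only [rpow_two, ← sqrt_eq_rpow] using
    integral_mul_le_Lp_mul_Lq_of_nonneg HolderConjugate.two_two hf₀ hg₀
      (by simpa using hf) (by simpa using hg)

lemma memLp_two_abs_of_integrable_sq {α : Type*} [MeasurableSpace α] {μ : Measure α}
    {f : α → ℝ} (hf : Integrable (fun x => f x ^ 2) μ) : MemLp (fun x => |f x|) 2 μ := by
  have hm : AEStronglyMeasurable (fun x => |f x|) μ := by
    simpa only [sqrt_sq_eq_abs] using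
      continuous_sqrt.comp_aestronglyMeasurable hf.aestronglyMeasurable
  exact (memLp_two_iff_integrable_sq hm).2 (by simpa only [sq_abs] using hf)

lemma sq_rpow_mul_sub_rpow {p q u t : ℝ} (hu : 0 ≤ u) (hut : u ≤ t) :
    (u ^ p * (t - u) ^ q) ^ 2 = u ^ (2 * p) * (t - u) ^ (2 * q) := by
  rw [mul_pow, ← rpow_mul_natCast hu, ← rpow_mul_natCast (sub_nonneg.2 hut)]
  push_cast
  ring_nf

section Weight

variable {p q s t : ℝ}

lemma memLp_rpow_mul_sub_rpow (hp : -1 / 2 < p) (hq : 0 ≤ q) (hs : 0 ≤ s) :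
    MemLp (fun u => u ^ p * (t - u) ^ q) 2 (volume.restrict (Set.Ioc s t)) := by
  refine (memLp_two_iff_integrable_sq (by fun_prop)).2 ?_
  exact (intervalIntegrable_rpow_mul_sub_rpow (by linarith) (by linarith) t s t).1.congr_fun
    (fun u hu => (sq_rpow_mul_sub_rpow (hs.trans hu.1.le) hu.2).symm) measurableSet_Ioc

lemma integral_sq_rpow_mul_sub_rpow_le (hp : -1 / 2 < p) (hp₀ : p ≤ 0) (hq : 0 ≤ q)
    (hs : 0 ≤ s) (hst : s ≤ t) :
    ∫ u in Set.Ioc s t, (u ^ p * (t - u) ^ q) ^ 2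
      ≤ (t - s) ^ (2 * p + 2 * q + 1) * betaFn (2 * p + 1) (2 * q + 1) := by
  rw [setIntegral_congr_fun measurableSet_Ioc
    fun u hu => sq_rpow_mul_sub_rpow (hs.trans hu.1.le) hu.2, ← integral_of_le hst]
  have h := integral_rpow_mul_sub_rpow_le_betaFn (a := 2 * p + 1) (b := 2 * q + 1)
    (by linarith) (by linarith) (by linarith) hs hst
  rwa [add_sub_cancel_right, add_sub_cancel_right,
    show 2 * p + 1 + (2 * q + 1) - 1 = 2 * p + 2 * q + 1 by ring] at h

lemma intervalIntegrable_rpow_mul_sub_rpow_mul_abs (hp : -1 / 2 < p) (hq : 0 ≤ q)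
    (hs : 0 ≤ s) (hst : s ≤ t) {f : ℝ → ℝ}
    (hf : IntegrableOn (fun u => f u ^ 2) (Set.Ioc s t)) :
    IntervalIntegrable (fun u => u ^ p * (t - u) ^ q * |f u|) volume s t :=
  (intervalIntegrable_iff_integrableOn_Ioc_of_le hst).2
    ((memLp_rpow_mul_sub_rpow hp hq hs).integrable_mul (memLp_two_abs_of_integrable_sq hf))

lemma integral_rpow_mul_sub_rpow_mul_abs_le (hp : -1 / 2 < p) (hp₀ : p ≤ 0) (hq : 0 ≤ q)
    (hs : 0 ≤ s) (hst : s ≤ t) {f : ℝ → ℝ}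
    (hf : IntegrableOn (fun u => f u ^ 2) (Set.Ioc s t)) :
    ∫ u in s..t, u ^ p * (t - u) ^ q * |f u|
      ≤ √((t - s) ^ (2 * p + 2 * q + 1) * betaFn (2 * p + 1) (2 * q + 1)) *
        √(∫ u in s..t, f u ^ 2) := by
  rw [integral_of_le hst, integral_of_le hst]
  have hφ₀ : 0 ≤ᵐ[volume.restrict (Set.Ioc s t)] fun u => u ^ p * (t - u) ^ q := by
    filter_upwards [ae_restrict_mem measurableSet_Ioc] with u hu
    exact mul_nonneg (rpow_nonneg (hs.trans hu.1.le) _) (rpow_nonneg (sub_nonneg.2 hu.2) _)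
  calc _ ≤ √(∫ u in Set.Ioc s t, (u ^ p * (t - u) ^ q) ^ 2) *
        √(∫ u in Set.Ioc s t, |f u| ^ 2) :=
        integral_mul_le_sqrt_mul_sqrt hφ₀ (.of_forall fun _ => abs_nonneg _)
          (memLp_rpow_mul_sub_rpow hp hq hs) (memLp_two_abs_of_integrable_sq hf)
    _ ≤ _ := by
        simp only [sq_abs]
        gcongr
        exact integral_sq_rpow_mul_sub_rpow_le hp hp₀ hq hs hst

end Weight

lemma integral_rpow_mul_abs_mul_integral_rpow_le {H T s t : ℝ} (hH : 1 / 2 < H) (hs : 0 ≤ s)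
    (hst : s ≤ t) (htT : t ≤ T) {f : ℝ → ℝ}
    (hf : IntervalIntegrable (fun u => u ^ (1/2 - H) * (t - u) ^ (H - 1/2) * |f u|) volume s t) :
    ∫ u in s..t, u ^ (1/2 - H) * |f u| * ∫ r in u..t, r ^ (H - 1/2) * (r - u) ^ (H - 3/2)
      ≤ T ^ (H - 1/2) / (H - 1/2) *
        ∫ u in s..t, u ^ (1/2 - H) * (t - u) ^ (H - 1/2) * |f u| := by
  rw [← intervalIntegral.integral_const_mul, integral_of_le hst, integral_of_le hst]
  refine integral_mono_of_nonneg ?_ (hf.1.const_mul _) ?_ <;>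
    filter_upwards [ae_restrict_mem measurableSet_Ioc] with u ⟨hsu, hut⟩
  all_goals have hu : 0 ≤ u := hs.trans hsu.le
  · exact mul_nonneg (mul_nonneg (rpow_nonneg hu _) (abs_nonneg _))
      (integral_rpow_mul_rpow_sub_nonneg hu hut)
  · have h := integral_rpow_mul_rpow_sub_le (p := H - 1/2) (q := H - 3/2)
      (by linarith) (by linarith) hu hut htT
    rw [show H - 3/2 + 1 = H - 1/2 by ring] at h
    calc _ ≤ u ^ (1/2 - H) * |f u| * (T ^ (H - 1/2) * ((t - u) ^ (H - 1/2) / (H - 1/2))) := by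
          gcongr
      _ = _ := by ring

theorem stmt_10 (H T s t : ℝ) (hH : H ∈ Set.Ioo (1/2 : ℝ) 1)
    (hs : 0 ≤ s) (hst : s ≤ t) (ht : t ≤ T)
    (g : ℝ → ℝ) (hg : IntegrableOn (fun u => (g u)^2) (Set.Icc 0 T)) :
    ∫ u in s..t, u ^ (1/2 - H) * |g u| *
        (∫ r in u..t, r ^ (H - 1/2) * (r - u) ^ (H - 3/2))
      ≤ (Real.sqrt (betaFn (2 - 2*H) (2*H)) * T ^ (H - 1/2) / (H - 1/2)) *
        (∫ u in (0:ℝ)..T, (g u)^2) ^ (1/2 : ℝ) * Real.sqrt (t - s) := by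
  obtain ⟨hH₁, hH₂⟩ := hH
  have hT : 0 ≤ T := hs.trans (hst.trans ht)
  have hg' : IntegrableOn (fun u => g u ^ 2) (Set.Ioc s t) :=
    hg.mono_set (Set.Ioc_subset_Icc_self.trans (Set.Icc_subset_Icc hs ht))
  have hCS := integral_rpow_mul_sub_rpow_mul_abs_le (p := 1/2 - H) (q := H - 1/2)
    (by linarith) (by linarith) (by linarith) hs hst hg'
  rw [show 2 * (1/2 - H) + 2 * (H - 1/2) + 1 = 1 by ring, rpow_one,
    show 2 * (1/2 - H) + 1 = 2 - 2*H by ring, show 2 * (H - 1/2) + 1 = 2*H by ring] at hCS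
  have hg_norm : ∫ u in s..t, g u ^ 2 ≤ ∫ u in (0:ℝ)..T, g u ^ 2 :=
    integral_mono_interval hs hst ht (.of_forall fun _ => sq_nonneg _)
      ((intervalIntegrable_iff_integrableOn_Icc_of_le hT).2 hg)
  calc _ ≤ T ^ (H - 1/2) / (H - 1/2) *
        ∫ u in s..t, u ^ (1/2 - H) * (t - u) ^ (H - 1/2) * |g u| :=
        integral_rpow_mul_abs_mul_integral_rpow_le hH₁ hs hst ht
          (intervalIntegrable_rpow_mul_sub_rpow_mul_abs (by linarith) (by linarith) hs hst hg')
    _ ≤ T ^ (H - 1/2) / (H - 1/2) *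
        (√((t - s) * betaFn (2 - 2*H) (2*H)) * √(∫ u in (0:ℝ)..T, g u ^ 2)) := by
        gcongr
        exact hCS.trans (by gcongr)
    _ = _ := by
        rw [sqrt_mul (by linarith), ← sqrt_eq_rpow]
        ring
end

section
/- Let H ∈ (1/2,1), T > 0, and let g : [0,T] → ℝ be M-bounded and measurable. Then for all 0 ≤ s ≤ t ≤ T, | ∫_s^t ∫_0^r (r/u)^{H-1/2} (r-u)^{H-3/2} k(u) du dr | ≤ C(T,H)·‖k‖_{L²([0,T])}·((t-s)^{H-1/2} + (t-s)^{1/2}) for every k ∈ L²([0,T]), where C(T,H) depends only on T and H. -/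
open Real MeasureTheory intervalIntegral
open scoped ENNReal
open Set

/-!
Write `a = H - 1/2 ∈ (0, 1/2)` and view the kernel as `(r/u)^a` integrated against the measure
`(r - u)^(a-1) du dr` on the trapezoid `s < r ≤ t, 0 < u < r`. Cauchy–Schwarz for this measure
bounds the double integral by the square root of the product of
* `∫∫ (r - u)^(a-1) (r/u)^(2a)`, where each inner integral is a Beta integral, at most
  `2^a r^a (1/(1-2a) + 1/a)` after splitting at `u = r/2`; so this factor is `O(t - s)`;
* `∫∫ (r - u)^(a-1) k(u)^2`, which after Tonelli is at most `(t - s)^a / a · ‖k‖₂²`.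
Hence the double integral is `O(‖k‖₂ (t - s)^((1+a)/2))`, and
`(t - s)^((1+a)/2) ≤ T^(a/2) (t - s)^(1/2)`.
All estimates go through lower Lebesgue integrals of `‖·‖ₑ`, so no integrability of the inner
Bochner integrals is needed.
-/

theorem lintegral_ofReal_const_mul {α : Type*} [MeasurableSpace α] {μ : Measure α} {c : ℝ}
    (hc : 0 ≤ c) (f : α → ℝ) :
    ∫⁻ x, ENNReal.ofReal (c * f x) ∂μ = ENNReal.ofReal c * ∫⁻ x, ENNReal.ofReal (f x) ∂μ := by
  simp_rw [ENNReal.ofReal_mul hc]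
  exact lintegral_const_mul' _ _ ENNReal.ofReal_ne_top

theorem lintegral_mul_mul_le_L2_mul_L2 {α : Type*} [MeasurableSpace α] (μ : Measure α)
    {w f g : α → ℝ≥0∞} (hw : AEMeasurable w μ) (hf : AEMeasurable f μ)
    (hg : AEMeasurable g μ) :
    ∫⁻ x, w x * f x * g x ∂μ
      ≤ (∫⁻ x, w x * f x ^ 2 ∂μ) ^ (1 / 2 : ℝ) * (∫⁻ x, w x * g x ^ 2 ∂μ) ^ (1 / 2 : ℝ) := by
  have hsq : ∀ x y : ℝ≥0∞, (x ^ (1 / 2 : ℝ) * y) ^ (2 : ℝ) = x * y ^ 2 := fun x y => by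
    rw [ENNReal.mul_rpow_of_nonneg _ _ zero_le_two, ← ENNReal.rpow_mul]
    norm_num
  have hw' : AEMeasurable (fun x => w x ^ (1 / 2 : ℝ)) μ := hw.pow_const _
  have key := ENNReal.lintegral_mul_le_Lp_mul_Lq μ Real.HolderConjugate.two_two
    (hw'.mul hf) (hw'.mul hg)
  simp only [Pi.mul_apply, hsq] at key
  refine le_of_eq_of_le (lintegral_congr fun x => ?_) key
  rw [mul_mul_mul_comm, ← ENNReal.rpow_add_of_nonneg _ _ (by norm_num) (by norm_num)]
  norm_num [mul_assoc]

theorem lintegral_Ioc_sub_rpow {c d e : ℝ} (hcd : c ≤ d) (he : -1 < e) :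
    ∫⁻ x in Ioc c d, ENNReal.ofReal ((x - c) ^ e)
      = ENNReal.ofReal ((d - c) ^ (e + 1) / (e + 1)) := by
  have hint : IntervalIntegrable (fun x : ℝ => (x - c) ^ e) volume c d := by
    simpa using
      (intervalIntegral.intervalIntegrable_rpow' he (a := 0) (b := d - c)).comp_sub_right c
  rw [← ofReal_integral_eq_lintegral_ofReal
      ((intervalIntegrable_iff_integrableOn_Ioc_of_le hcd).mp hint)
      (ae_restrict_of_forall_mem measurableSet_Ioc fun x hx =>
        rpow_nonneg (sub_nonneg.mpr hx.1.le) e),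
    ← intervalIntegral.integral_of_le hcd, intervalIntegral.integral_comp_sub_right (· ^ e),
    sub_self, integral_rpow (Or.inl he), zero_rpow (by linarith), sub_zero]

theorem lintegral_Ioc_rpow_sub {c d e : ℝ} (hcd : c ≤ d) (he : -1 < e) :
    ∫⁻ x in Ioc c d, ENNReal.ofReal ((d - x) ^ e)
      = ENNReal.ofReal ((d - c) ^ (e + 1) / (e + 1)) := by
  have hint : IntervalIntegrable (fun x : ℝ => (d - x) ^ e) volume c d := by
    simpa using
      ((intervalIntegral.intervalIntegrable_rpow' he (a := 0) (b := d - c)).comp_sub_left d).symm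
  rw [← ofReal_integral_eq_lintegral_ofReal
      ((intervalIntegrable_iff_integrableOn_Ioc_of_le hcd).mp hint)
      (ae_restrict_of_forall_mem measurableSet_Ioc fun x hx =>
        rpow_nonneg (sub_nonneg.mpr hx.2) e),
    ← intervalIntegral.integral_of_le hcd, intervalIntegral.integral_comp_sub_left (· ^ e),
    sub_self, integral_rpow (Or.inl he), zero_rpow (by linarith), sub_zero]

theorem lintegral_Ioo_rpow_mul_rpow_sub_le {α β r : ℝ} (hα : -1 < α) (hα0 : α ≤ 0)
    (hβ : -1 < β) (hβ0 : β ≤ 0) (hr : 0 < r) :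
    ∫⁻ u in Ioo 0 r, ENNReal.ofReal (u ^ α * (r - u) ^ β)
      ≤ ENNReal.ofReal ((r / 2) ^ (α + β + 1) * (1 / (α + 1) + 1 / (β + 1))) := by
  have hr2 : 0 < r / 2 := half_pos hr
  have hsplit : Ioo 0 r ⊆ Ioc 0 (r / 2) ∪ Ioc (r / 2) r := by
    rw [Ioc_union_Ioc_eq_Ioc hr2.le (half_le_self hr.le)]
    exact Ioo_subset_Ioc_self
  have hleft : ∫⁻ u in Ioc 0 (r / 2), ENNReal.ofReal (u ^ α * (r - u) ^ β)
      ≤ ENNReal.ofReal ((r / 2) ^ β * ((r / 2) ^ (α + 1) / (α + 1))) := by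
    calc _ ≤ ∫⁻ u in Ioc 0 (r / 2), ENNReal.ofReal ((r / 2) ^ β * (u - 0) ^ α) := by
          refine setLIntegral_mono' measurableSet_Ioc fun u hu => ENNReal.ofReal_le_ofReal ?_
          rw [sub_zero, mul_comm]
          exact mul_le_mul_of_nonneg_right
            (rpow_le_rpow_of_nonpos hr2 (by linarith [hu.2]) hβ0) (rpow_nonneg hu.1.le α)
      _ = _ := by
          rw [lintegral_ofReal_const_mul (rpow_nonneg hr2.le β), lintegral_Ioc_sub_rpow hr2.le hα,
            sub_zero, ← ENNReal.ofReal_mul (rpow_nonneg hr2.le β)]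
  have hright : ∫⁻ u in Ioc (r / 2) r, ENNReal.ofReal (u ^ α * (r - u) ^ β)
      ≤ ENNReal.ofReal ((r / 2) ^ α * ((r / 2) ^ (β + 1) / (β + 1))) := by
    calc _ ≤ ∫⁻ u in Ioc (r / 2) r, ENNReal.ofReal ((r / 2) ^ α * (r - u) ^ β) := by
          refine setLIntegral_mono' measurableSet_Ioc fun u hu => ENNReal.ofReal_le_ofReal ?_
          exact mul_le_mul_of_nonneg_right (rpow_le_rpow_of_nonpos hr2 hu.1.le hα0)
            (rpow_nonneg (by linarith [hu.2]) β)
      _ = _ := by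
          rw [lintegral_ofReal_const_mul (rpow_nonneg hr2.le α),
            lintegral_Ioc_rpow_sub (half_le_self hr.le) hβ, sub_half,
            ← ENNReal.ofReal_mul (rpow_nonneg hr2.le α)]
  calc _ ≤ ∫⁻ u in Ioc 0 (r / 2) ∪ Ioc (r / 2) r, ENNReal.ofReal (u ^ α * (r - u) ^ β) :=
        lintegral_mono_set hsplit
    _ ≤ _ := lintegral_union_le _ _ _
    _ ≤ _ := add_le_add hleft hright
    _ = _ := by
        have hα1 : 0 < α + 1 := by linarith
        have hβ1 : 0 < β + 1 := by linarith
        rw [← ENNReal.ofReal_add (by positivity) (by positivity)]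
        congr 1
        rw [rpow_add hr2, rpow_add hr2, rpow_add hr2, rpow_add hr2, rpow_one]
        field_simp

def trapezoid (b s t : ℝ) : Set (ℝ × ℝ) := {p | p.1 ∈ Ioc s t ∧ p.2 ∈ Ioo b p.1}

theorem measurableSet_trapezoid (b s t : ℝ) : MeasurableSet (trapezoid b s t) := by
  simp only [trapezoid, mem_Ioc, mem_Ioo, ofPred_and]
  exact ((measurableSet_lt measurable_const measurable_fst).inter
    (measurableSet_le measurable_fst measurable_const)).inter
    ((measurableSet_lt measurable_const measurable_snd).inter
      (measurableSet_lt measurable_snd measurable_fst))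

section Trapezoid

variable {F : ℝ → ℝ → ℝ≥0∞}

theorem lintegral_Ioc_lintegral_Ioo_eq_setLIntegral
    (hF : Measurable fun p : ℝ × ℝ => F p.1 p.2) (b s t : ℝ) :
    ∫⁻ r in Ioc s t, ∫⁻ u in Ioo b r, F r u = ∫⁻ p in trapezoid b s t, F p.1 p.2 := by
  have hS := measurableSet_trapezoid b s t
  have hFS : Measurable ((trapezoid b s t).indicator fun p => F p.1 p.2) := hF.indicator hS
  rw [← lintegral_indicator hS, Measure.volume_eq_prod, lintegral_prod _ hFS.aemeasurable,
    ← lintegral_indicator measurableSet_Ioc]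
  refine lintegral_congr fun r => ?_
  by_cases hr : r ∈ Ioc s t
  · rw [indicator_of_mem hr, ← lintegral_indicator measurableSet_Ioo]
    refine lintegral_congr fun u => ?_
    simp only [indicator, trapezoid, mem_ofPred_eq, hr, true_and]
    congr
  · simp only [indicator, trapezoid, mem_ofPred_eq, hr, false_and, if_false, lintegral_zero]

theorem lintegral_Ioo_lintegral_Ioc_max_eq_setLIntegral
    (hF : Measurable fun p : ℝ × ℝ => F p.1 p.2) (b s t : ℝ) :
    ∫⁻ u in Ioo b t, ∫⁻ r in Ioc (max s u) t, F r u = ∫⁻ p in trapezoid b s t, F p.1 p.2 := by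
  have hS := measurableSet_trapezoid b s t
  have hFS : Measurable ((trapezoid b s t).indicator fun p => F p.1 p.2) := hF.indicator hS
  rw [← lintegral_indicator hS, Measure.volume_eq_prod,
    lintegral_prod_symm _ hFS.aemeasurable, ← lintegral_indicator measurableSet_Ioo]
  refine lintegral_congr fun u => ?_
  by_cases hu : u ∈ Ioo b t
  · rw [indicator_of_mem hu, ← lintegral_indicator measurableSet_Ioc]
    refine lintegral_congr fun r => ?_
    have hmem : r ∈ Ioc (max s u) t ↔ r ∈ Ioc s t ∧ u ∈ Ioo b r := by
      simp only [mem_Ioc, mem_Ioo, max_lt_iff, hu.1, true_and]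
      tauto
    simp only [indicator, trapezoid, mem_ofPred_eq, hmem]
    congr
  · have hnot : ∀ r, ¬ (r ∈ Ioc s t ∧ u ∈ Ioo b r) := fun r h =>
      hu ⟨h.2.1, h.2.2.trans_le h.1.2⟩
    simp only [indicator, trapezoid, mem_ofPred_eq, hu, hnot, if_false, lintegral_zero]

end Trapezoid

theorem lintegral_Ioc_max_sub_rpow_le {a s t u : ℝ} (ha : 0 < a) (ha1 : a ≤ 1) (hst : s ≤ t)
    (hut : u ≤ t) :
    ∫⁻ r in Ioc (max s u) t, ENNReal.ofReal ((r - u) ^ (a - 1))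
      ≤ ENNReal.ofReal ((t - s) ^ a / a) := by
  have hct : max s u ≤ t := max_le hst hut
  calc _ ≤ ∫⁻ r in Ioc (max s u) t, ENNReal.ofReal ((r - max s u) ^ (a - 1)) := by
        refine setLIntegral_mono' measurableSet_Ioc fun r hr => ENNReal.ofReal_le_ofReal ?_
        exact rpow_le_rpow_of_nonpos (sub_pos.mpr hr.1)
          (sub_le_sub_left (le_max_right s u) r) (by linarith)
    _ = ENNReal.ofReal ((t - max s u) ^ a / a) := by
        rw [lintegral_Ioc_sub_rpow hct (by linarith), sub_add_cancel]
    _ ≤ _ := by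
        gcongr
        exact le_max_left s u

/-- A.e.-measurability of `k ^ 2` gives that of `|k|`, but not of `k` itself. -/
theorem exists_measurable_ae_eq_enorm {α : Type*} [MeasurableSpace α] {μ : Measure α}
    {k : α → ℝ} (hk : AEMeasurable (fun x => k x ^ 2) μ) :
    ∃ m : α → ℝ≥0∞, Measurable m ∧ m =ᵐ[μ] fun x => ‖k x‖ₑ := by
  have h : AEMeasurable (fun x => ‖k x‖ₑ) μ := by
    simpa only [Real.sqrt_sq_eq_abs, ← Real.enorm_eq_ofReal_abs] using hk.sqrt.ennreal_ofReal
  exact ⟨h.mk, h.measurable_mk, h.ae_eq_mk.symm⟩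

theorem lintegral_Ioo_sq_le_integral_sq {k : ℝ → ℝ} {m : ℝ → ℝ≥0∞} {t T : ℝ} (hT : 0 ≤ T)
    (htT : t ≤ T) (hk : IntegrableOn (fun u => k u ^ 2) (Icc 0 T))
    (hm : m =ᵐ[volume.restrict (Icc 0 T)] fun u => ‖k u‖ₑ) :
    ∫⁻ u in Ioo 0 t, m u ^ 2 ≤ ENNReal.ofReal (∫ u in (0:ℝ)..T, k u ^ 2) := by
  calc _ ≤ ∫⁻ u in Icc 0 T, m u ^ 2 :=
        lintegral_mono_set fun u hu => ⟨hu.1.le, hu.2.le.trans htT⟩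
    _ = ∫⁻ u in Icc 0 T, ENNReal.ofReal (k u ^ 2) := by
        refine lintegral_congr_ae (hm.mono fun u (hu : m u = ‖k u‖ₑ) => ?_)
        dsimp only
        rw [hu, Real.enorm_eq_ofReal_abs, ← ENNReal.ofReal_pow (abs_nonneg _), sq_abs]
    _ = _ := by
        rw [← ofReal_integral_eq_lintegral_ofReal hk (ae_of_all _ fun u => sq_nonneg (k u)),
          integral_of_le hT, integral_Icc_eq_integral_Ioc]

theorem enorm_integral_kernel_le {a r T : ℝ} {k : ℝ → ℝ} {m : ℝ → ℝ≥0∞} (hr : 0 < r)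
    (hrT : r ≤ T) (hm : m =ᵐ[volume.restrict (Icc 0 T)] fun u => ‖k u‖ₑ) :
    ‖∫ u in (0:ℝ)..r, (r / u) ^ a * (r - u) ^ (a - 1) * k u‖ₑ
      ≤ ∫⁻ u in Ioo 0 r,
          ENNReal.ofReal ((r - u) ^ (a - 1)) * ENNReal.ofReal ((r / u) ^ a) * m u := by
  rw [integral_of_le hr.le]
  refine (enorm_integral_le_lintegral_enorm _).trans_eq ?_
  rw [Measure.restrict_congr_set Ioo_ae_eq_Ioc.symm]
  refine lintegral_congr_ae ?_
  filter_upwards [ae_restrict_mem measurableSet_Ioo,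
    ae_restrict_of_ae_restrict_of_subset
      (Ioo_subset_Icc_self.trans (Icc_subset_Icc_right hrT)) hm]
    with u hu hmu
  rw [hmu, enorm_mul, enorm_mul, Real.enorm_of_nonneg (rpow_nonneg (div_pos hr hu.1).le a),
    Real.enorm_of_nonneg (rpow_nonneg (sub_pos.mpr hu.2).le _), mul_comm (ENNReal.ofReal _)]

theorem lintegral_Ioo_kernel_sq_le {a r : ℝ} (ha : 0 < a) (ha' : a < 1 / 2) (hr : 0 < r) :
    ∫⁻ u in Ioo 0 r, ENNReal.ofReal ((r - u) ^ (a - 1)) * ENNReal.ofReal ((r / u) ^ a) ^ 2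
      ≤ ENNReal.ofReal (2 ^ a * r ^ a * (1 / (1 - 2 * a) + 1 / a)) := by
  calc _ = ∫⁻ u in Ioo 0 r,
          ENNReal.ofReal (r ^ (2 * a) * (u ^ (-(2 * a)) * (r - u) ^ (a - 1))) := by
        refine setLIntegral_congr_fun measurableSet_Ioo fun u hu => ?_
        rw [← ENNReal.ofReal_pow (rpow_nonneg (div_pos hr hu.1).le a),
          ← ENNReal.ofReal_mul (rpow_nonneg (sub_pos.mpr hu.2).le _)]
        congr 1
        rw [div_rpow hr.le hu.1.le, rpow_neg hu.1.le, mul_comm 2 a, rpow_mul hr.le,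
          rpow_mul hu.1.le, rpow_two, rpow_two]
        field_simp
    _ ≤ ENNReal.ofReal (r ^ (2 * a)) * ENNReal.ofReal
          ((r / 2) ^ (-(2 * a) + (a - 1) + 1) * (1 / (-(2 * a) + 1) + 1 / (a - 1 + 1))) := by
        rw [lintegral_ofReal_const_mul (rpow_nonneg hr.le _)]
        gcongr
        exact lintegral_Ioo_rpow_mul_rpow_sub_le (by linarith) (by linarith) (by linarith)
          (by linarith) hr
    _ = _ := by
        rw [← ENNReal.ofReal_mul (rpow_nonneg hr.le _)]
        congr 1
        rw [show -(2 * a) + (a - 1) + 1 = -a by ring, show a - 1 + 1 = a by ring,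
          div_rpow hr.le zero_le_two, rpow_neg hr.le, rpow_neg zero_le_two, mul_comm 2 a,
          rpow_mul hr.le, rpow_two]
        field_simp
        ring

theorem setLIntegral_trapezoid_weight_mul_sq_le {a b s t : ℝ} {m : ℝ → ℝ≥0∞} (ha : 0 < a)
    (ha1 : a ≤ 1) (hst : s ≤ t) (hm : Measurable m) :
    ∫⁻ p in trapezoid b s t, ENNReal.ofReal ((p.1 - p.2) ^ (a - 1)) * m p.2 ^ 2
      ≤ ENNReal.ofReal ((t - s) ^ a / a) * ∫⁻ u in Ioo b t, m u ^ 2 := by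
  rw [← lintegral_Ioo_lintegral_Ioc_max_eq_setLIntegral
      (F := fun r u => ENNReal.ofReal ((r - u) ^ (a - 1)) * m u ^ 2) (by fun_prop),
    ← lintegral_const_mul' _ _ ENNReal.ofReal_ne_top]
  refine setLIntegral_mono' measurableSet_Ioo fun u hu => ?_
  rw [lintegral_mul_const _ (by fun_prop)]
  exact mul_le_mul_left (lintegral_Ioc_max_sub_rpow_le ha ha1 hst hu.2.le) _

theorem lintegral_enorm_integral_kernel_le {a s t T : ℝ} {k : ℝ → ℝ} {m : ℝ → ℝ≥0∞}
    (ha : 0 < a) (ha' : a < 1 / 2) (hs : 0 ≤ s) (hst : s ≤ t) (htT : t ≤ T)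
    (hk : IntegrableOn (fun u => k u ^ 2) (Icc 0 T)) (hm_meas : Measurable m)
    (hm : m =ᵐ[volume.restrict (Icc 0 T)] fun u => ‖k u‖ₑ) :
    ∫⁻ r in Ioc s t, ‖∫ u in (0:ℝ)..r, (r / u) ^ a * (r - u) ^ (a - 1) * k u‖ₑ
      ≤ ENNReal.ofReal (2 ^ a * T ^ a * (1 / (1 - 2 * a) + 1 / a) * (t - s)) ^ (1 / 2 : ℝ)
        * ENNReal.ofReal ((t - s) ^ a / a * ∫ u in (0:ℝ)..T, k u ^ 2) ^ (1 / 2 : ℝ) := by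
  have hT : 0 ≤ T := hs.trans (hst.trans htT)
  have hB : 0 ≤ 1 / (1 - 2 * a) + 1 / a := by
    have : 0 < 1 - 2 * a := by linarith
    positivity
  calc _ ≤ ∫⁻ r in Ioc s t, ∫⁻ u in Ioo 0 r,
          ENNReal.ofReal ((r - u) ^ (a - 1)) * ENNReal.ofReal ((r / u) ^ a) * m u :=
        setLIntegral_mono' measurableSet_Ioc fun r hr =>
          enorm_integral_kernel_le (hs.trans_lt hr.1) (hr.2.trans htT) hm
    _ = ∫⁻ p in trapezoid 0 s t,
          ENNReal.ofReal ((p.1 - p.2) ^ (a - 1)) * ENNReal.ofReal ((p.1 / p.2) ^ a) * m p.2 :=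
        lintegral_Ioc_lintegral_Ioo_eq_setLIntegral (by fun_prop) 0 s t
    _ ≤ _ := lintegral_mul_mul_le_L2_mul_L2 _ (by fun_prop) (by fun_prop) (by fun_prop)
    _ ≤ _ := by
        gcongr
        · rw [← lintegral_Ioc_lintegral_Ioo_eq_setLIntegral
            (F := fun r u =>
              ENNReal.ofReal ((r - u) ^ (a - 1)) * ENNReal.ofReal ((r / u) ^ a) ^ 2) (by fun_prop),
            ENNReal.ofReal_mul (by positivity), ← Real.volume_Ioc,
            ← setLIntegral_const]
          refine setLIntegral_mono' measurableSet_Ioc fun r hr => ?_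
          refine (lintegral_Ioo_kernel_sq_le ha ha' (hs.trans_lt hr.1)).trans ?_
          gcongr
          exacts [hs.trans hr.1.le, hr.2.trans htT]
        · refine (setLIntegral_trapezoid_weight_mul_sq_le ha (by linarith) hst hm_meas).trans ?_
          rw [ENNReal.ofReal_mul (by positivity)]
          gcongr
          exact lintegral_Ioo_sq_le_integral_sq hT htT hk hm

theorem abs_integral_integral_kernel_le {a s t T : ℝ} {k : ℝ → ℝ} (ha : 0 < a)
    (ha' : a < 1 / 2) (hs : 0 ≤ s) (hst : s ≤ t) (htT : t ≤ T)
    (hk : IntegrableOn (fun u => k u ^ 2) (Icc 0 T)) :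
    |∫ r in s..t, ∫ u in (0:ℝ)..r, (r / u) ^ a * (r - u) ^ (a - 1) * k u|
      ≤ (2 ^ a * T ^ a * (1 / (1 - 2 * a) + 1 / a) * T ^ a / a) ^ (1 / 2 : ℝ)
        * (∫ u in (0:ℝ)..T, k u ^ 2) ^ (1 / 2 : ℝ) * (t - s) ^ (1 / 2 : ℝ) := by
  obtain ⟨m, hm_meas, hm⟩ :=
    exists_measurable_ae_eq_enorm hk.aestronglyMeasurable.aemeasurable
  have hT : 0 ≤ T := hs.trans (hst.trans htT)
  have hts : 0 ≤ t - s := sub_nonneg.mpr hst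
  have hB : 0 ≤ 1 / (1 - 2 * a) + 1 / a := by
    have : 0 < 1 - 2 * a := by linarith
    positivity
  have hN : 0 ≤ ∫ u in (0:ℝ)..T, k u ^ 2 := integral_nonneg hT fun u _ => sq_nonneg (k u)
  have hJ := (enorm_integral_le_lintegral_enorm _).trans
    (lintegral_enorm_integral_kernel_le ha ha' hs hst htT hk hm_meas hm)
  rw [← integral_of_le hst, Real.enorm_eq_ofReal_abs,
    ENNReal.ofReal_rpow_of_nonneg (by positivity) (by norm_num),
    ENNReal.ofReal_rpow_of_nonneg (by positivity) (by norm_num),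
    ← ENNReal.ofReal_mul (by positivity), ENNReal.ofReal_le_ofReal_iff (by positivity),
    ← mul_rpow (by positivity) (by positivity)] at hJ
  refine hJ.trans ?_
  set B := 1 / (1 - 2 * a) + 1 / a
  set N := ∫ u in (0:ℝ)..T, k u ^ 2
  have hta : (t - s) ^ a ≤ T ^ a := rpow_le_rpow hts (by linarith) ha.le
  calc (2 ^ a * T ^ a * B * (t - s) * ((t - s) ^ a / a * N)) ^ (1 / 2 : ℝ)
      = (2 ^ a * T ^ a * B * (t - s) ^ a / a * (N * (t - s))) ^ (1 / 2 : ℝ) := by ring_nf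
    _ ≤ (2 ^ a * T ^ a * B * T ^ a / a * (N * (t - s))) ^ (1 / 2 : ℝ) := by gcongr
    _ = _ := by rw [mul_rpow (by positivity) (by positivity), mul_rpow hN hts, ← mul_assoc]

theorem stmt_19 (H T : ℝ) (hH : H ∈ Set.Ioo (1/2 : ℝ) 1) (hT : 0 < T) :
    ∃ C : ℝ, 0 < C ∧ ∀ k : ℝ → ℝ, IntegrableOn (fun u => (k u)^2) (Set.Icc 0 T) →
      ∀ s t : ℝ, 0 ≤ s → s ≤ t → t ≤ T →
        |∫ r in s..t, ∫ u in (0:ℝ)..r, (r/u) ^ (H - 1/2) * (r - u) ^ (H - 3/2) * k u|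
          ≤ C * (∫ u in (0:ℝ)..T, (k u)^2) ^ (1/2 : ℝ) *
            ((t - s) ^ (H - 1/2) + (t - s) ^ (1/2 : ℝ)) := by
  obtain ⟨hH1, hH2⟩ := hH
  rw [show H - 3 / 2 = H - 1 / 2 - 1 by ring]
  set a := H - 1 / 2 with ha_def
  have ha : 0 < a := by linarith
  have ha' : a < 1 / 2 := by linarith
  have hB : 0 < 1 / (1 - 2 * a) + 1 / a := by
    have : 0 < 1 - 2 * a := by linarith
    positivity
  refine ⟨(2 ^ a * T ^ a * (1 / (1 - 2 * a) + 1 / a) * T ^ a / a) ^ (1 / 2 : ℝ), by positivity,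
    fun k hk s t hs hst htT => ?_⟩
  have hN : 0 ≤ ∫ u in (0:ℝ)..T, k u ^ 2 := integral_nonneg hT.le fun u _ => sq_nonneg (k u)
  refine (abs_integral_integral_kernel_le ha ha' hs hst htT hk).trans ?_
  exact mul_le_mul_of_nonneg_left (le_add_of_nonneg_left (rpow_nonneg (sub_nonneg.mpr hst) _))
    (mul_nonneg (by positivity) (rpow_nonneg hN _))
end
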